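/- arXiv:2008.07477 — 3 statements merged into one kernel-verified Lean document; each statement's English description precedes it below -/
import Mathlib

section
/- Let H : ℝ → B(𝓗) be a differentiable family of self-adjoint operators on a Hilbert space 𝓗, and for each s let E_s be the spectral projection of H_s associated with a part of the spectrum separated from the rest by a uniform gap, expressed via the Riesz projection E_s = (2πi)⁻¹ ∮_Γ (ζ − H_s)⁻¹ dζ over a fixed contour Γ enclosing that spectral part for all s. Then s ↦ E_s is differentiable and ∂_s E_s = (2πi)⁻¹ ∮_Γ (ζ − H_s)⁻¹ (∂_s H_s) (ζ − H_s)⁻¹ dζ. -/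
/-!
By the second resolvent identity, `R(ζ, H x) - R(ζ, H s) = R(ζ, H x) (H x - H s) R(ζ, H s)`.
The resolvent is jointly continuous in `(x, ζ)`, hence bounded for `x` near `s` and `ζ` on the
contour, and `‖H x - H s‖ = O(|x - s|)` since `H` is differentiable at `s`. So the contour
integrand is Lipschitz in `x` at `s` with an integrable constant, and one may differentiate under
the integral sign; pointwise, the derivative of `x ↦ (ζ - H x)⁻¹` is `R(ζ, H s) H' R(ζ, H s)`.
-/

open MeasureTheory Metric Set Filter Topology

theorem hasDerivAt_integral_of_dominated_loc_of_lip' {α : Type*} [MeasurableSpace α]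
    {μ : Measure α} {𝕜 : Type*} [RCLike 𝕜] {E : Type*} [NormedAddCommGroup E]
    [NormedSpace ℝ E] [NormedSpace 𝕜 E] {F : 𝕜 → α → E} {F' : α → E} {x₀ : 𝕜} {s : Set 𝕜}
    {bound : α → ℝ}
    (hs : s ∈ 𝓝 x₀) (hF_meas : ∀ x ∈ s, AEStronglyMeasurable (F x) μ)
    (hF_int : Integrable (F x₀) μ) (hF'_meas : AEStronglyMeasurable F' μ)
    (h_lipsch : ∀ᵐ a ∂μ, ∀ x ∈ s, ‖F x a - F x₀ a‖ ≤ bound a * ‖x - x₀‖)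
    (bound_integrable : Integrable bound μ)
    (h_diff : ∀ᵐ a ∂μ, HasDerivAt (F · a) (F' a) x₀) :
    Integrable F' μ ∧ HasDerivAt (fun x ↦ ∫ a, F x a ∂μ) (∫ a, F' a ∂μ) x₀ := by
  set L : E →L[𝕜] 𝕜 →L[𝕜] E := ContinuousLinearMap.smulRightL 𝕜 𝕜 E 1
  replace h_diff : ∀ᵐ a ∂μ, HasFDerivAt (F · a) (L (F' a)) x₀ :=
    h_diff.mono fun x hx ↦ hx.hasFDerivAt
  have hm : AEStronglyMeasurable (L ∘ F') μ := L.continuous.comp_aestronglyMeasurable hF'_meas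
  obtain ⟨hF'_int, key⟩ := hasFDerivAt_integral_of_dominated_loc_of_lip'
    hs hF_meas hF_int hm h_lipsch bound_integrable h_diff
  replace hF'_int : Integrable F' μ := by
    rw [← integrable_norm_iff hm] at hF'_int
    simpa [L, (· ∘ ·), integrable_norm_iff hF'_meas] using! hF'_int
  refine ⟨hF'_int, ?_⟩
  by_cases hE : CompleteSpace E; swap
  · simpa [integral, hE] using! hasDerivAt_const x₀ 0
  simp_rw [hasDerivAt_iff_hasFDerivAt] at h_diff ⊢
  simpa only [(· ∘ ·), ContinuousLinearMap.integral_comp_comm _ hF'_int] using! key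

section NormedAlgebra

variable {R : Type*} [NormedRing R]

theorem HasDerivAt.ringInverse {𝕜 : Type*} [NontriviallyNormedField 𝕜] [NormedAlgebra 𝕜 R]
    [HasSummableGeomSeries R] {f : 𝕜 → R} {f' : R} {x : 𝕜} (hf : HasDerivAt f f' x)
    (hx : IsUnit (f x)) :
    HasDerivAt (fun y ↦ Ring.inverse (f y))
      (-(Ring.inverse (f x) * f' * Ring.inverse (f x))) x := by
  obtain ⟨u, hu⟩ := hx
  have := (hu ▸ hasFDerivAt_ringInverse (𝕜 := 𝕜) u).comp_hasDerivAt x hf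
  simpa [← hu, Function.comp_def] using this

theorem ContinuousOn.ringInverse [HasSummableGeomSeries R] {X : Type*} [TopologicalSpace X]
    {K : Set X} {f : X → R} (hf : ContinuousOn f K) (hunit : ∀ p ∈ K, IsUnit (f p)) :
    ContinuousOn (fun p ↦ Ring.inverse (f p)) K := fun p hp ↦ by
  obtain ⟨u, hu⟩ := hunit p hp
  exact (hu ▸ NormedRing.inverse_continuousAt u).comp_continuousWithinAt (hf p hp)

theorem norm_ringInverse_sub_sub_ringInverse_sub_le {c h h₀ : R}
    (hunit : IsUnit (c - h) ↔ IsUnit (c - h₀)) :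
    ‖Ring.inverse (c - h) - Ring.inverse (c - h₀)‖ ≤
      ‖Ring.inverse (c - h)‖ * ‖h - h₀‖ * ‖Ring.inverse (c - h₀)‖ := by
  rw [Ring.inverse_sub_inverse hunit, sub_sub_sub_cancel_left]
  exact norm_mul₃_le

variable [NormedAlgebra ℝ R] [CompleteSpace R]

theorem exists_eventually_norm_ringInverse_sub_sub_le {c H : ℝ → R} {s a b : ℝ}
    (hc : ContinuousOn c (Icc a b)) (hHc : Continuous H) (hH : DifferentiableAt ℝ H s)
    (hunit : ∀ x, ∀ t ∈ Icc a b, IsUnit (c t - H x)) :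
    ∃ K, ∀ᶠ x in 𝓝 s, ∀ t ∈ Icc a b,
      ‖Ring.inverse (c t - H x) - Ring.inverse (c t - H s)‖ ≤ K * ‖x - s‖ := by
  have hres_cont : ContinuousOn (fun p : ℝ × ℝ ↦ Ring.inverse (c p.2 - H p.1))
      (closedBall s 1 ×ˢ Icc a b) :=
    ((hc.comp continuousOn_snd fun p hp ↦ hp.2).sub (hHc.comp continuous_fst).continuousOn
      ).ringInverse fun p hp ↦ hunit p.1 p.2 hp.2
  obtain ⟨C, hC⟩ :=
    ((isCompact_closedBall s 1).prod isCompact_Icc).exists_bound_of_continuousOn hres_cont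
  obtain ⟨L, hL⟩ := hH.hasDerivAt.isBigO_sub.bound
  refine ⟨C * L * C, ?_⟩
  filter_upwards [closedBall_mem_nhds s one_pos, hL] with x hx hHx t ht
  have hCx : ‖Ring.inverse (c t - H x)‖ ≤ C := hC (x, t) ⟨hx, ht⟩
  have hCs : ‖Ring.inverse (c t - H s)‖ ≤ C := hC (s, t) ⟨mem_closedBall_self zero_le_one, ht⟩
  have hC0 : 0 ≤ C := (norm_nonneg _).trans hCs
  calc ‖Ring.inverse (c t - H x) - Ring.inverse (c t - H s)‖
      ≤ C * (L * ‖x - s‖) * C := by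
        grw [norm_ringInverse_sub_sub_ringInverse_sub_le
          (iff_of_true (hunit x t ht) (hunit s t ht)), hCx, hCs, hHx]
    _ = C * L * C * ‖x - s‖ := by ring

theorem hasDerivAt_intervalIntegral_mul_ringInverse_sub {w c H : ℝ → R} {H' : R} {s a b : ℝ}
    (hab : a ≤ b) (hw : ContinuousOn w (Icc a b)) (hc : ContinuousOn c (Icc a b))
    (hHc : Continuous H) (hH : HasDerivAt H H' s)
    (hunit : ∀ x, ∀ t ∈ Icc a b, IsUnit (c t - H x)) :
    HasDerivAt (fun x ↦ ∫ t in a..b, w t * Ring.inverse (c t - H x))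
      (∫ t in a..b, w t * (Ring.inverse (c t - H s) * H' * Ring.inverse (c t - H s))) s := by
  simp only [intervalIntegral.integral_of_le hab]
  have hres_cont (x : ℝ) : ContinuousOn (fun t ↦ Ring.inverse (c t - H x)) (Icc a b) :=
    (hc.sub continuousOn_const).ringInverse (hunit x)
  have hF_cont (x : ℝ) : ContinuousOn (fun t ↦ w t * Ring.inverse (c t - H x)) (Icc a b) :=
    hw.mul (hres_cont x)
  have hF'_cont : ContinuousOn
      (fun t ↦ w t * (Ring.inverse (c t - H s) * H' * Ring.inverse (c t - H s))) (Icc a b) :=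
    hw.mul (((hres_cont s).mul continuousOn_const).mul (hres_cont s))
  obtain ⟨K, hK⟩ :=
    exists_eventually_norm_ringInverse_sub_sub_le hc hHc hH.differentiableAt hunit
  have h_lip (t : ℝ) (ht : t ∈ Icc a b) (x : ℝ) (hx : ∀ t ∈ Icc a b,
      ‖Ring.inverse (c t - H x) - Ring.inverse (c t - H s)‖ ≤ K * ‖x - s‖) :
      ‖w t * Ring.inverse (c t - H x) - w t * Ring.inverse (c t - H s)‖ ≤
        ‖w t‖ * K * ‖x - s‖ := by
    rw [← mul_sub, mul_assoc]
    exact (norm_mul_le _ _).trans (mul_le_mul_of_nonneg_left (hx t ht) (norm_nonneg _))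
  have h_diff (t : ℝ) (ht : t ∈ Icc a b) : HasDerivAt (fun x ↦ w t * Ring.inverse (c t - H x))
      (w t * (Ring.inverse (c t - H s) * H' * Ring.inverse (c t - H s))) s := by
    have := ((hH.const_sub (c t)).ringInverse (hunit s t ht)).const_mul (w t)
    simpa only [mul_neg, neg_mul, neg_neg] using this
  refine (hasDerivAt_integral_of_dominated_loc_of_lip' hK
    (fun x _ ↦ ((hF_cont x).mono Ioc_subset_Icc_self).aestronglyMeasurable measurableSet_Ioc)
    (((hF_cont s).integrableOn_Icc).mono_set Ioc_subset_Icc_self)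
    ((hF'_cont.mono Ioc_subset_Icc_self).aestronglyMeasurable measurableSet_Ioc)
    (ae_restrict_of_forall_mem measurableSet_Ioc fun t ht x hx ↦
      h_lip t (Ioc_subset_Icc_self ht) x hx)
    (((hw.norm.mul continuousOn_const).integrableOn_Icc).mono_set Ioc_subset_Icc_self)
    (ae_restrict_of_forall_mem measurableSet_Ioc fun t ht ↦ h_diff t (Ioc_subset_Icc_self ht))).2

end NormedAlgebra

theorem stmt5_general {𝓗 : Type*} [NormedAddCommGroup 𝓗] [InnerProductSpace ℂ 𝓗] [CompleteSpace 𝓗]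
    (H H' : ℝ → 𝓗 →L[ℂ] 𝓗)
    (hH : ∀ s, HasDerivAt H (H' s) s)
    (γ γ' : ℝ → ℂ)
    (hγ : ∀ t, HasDerivAt γ (γ' t) t)
    (hγ' : Continuous γ')
    (hres : ∀ s t, IsUnit (γ t • (1 : 𝓗 →L[ℂ] 𝓗) - H s)) :
    ∀ s : ℝ, HasDerivAt
      (fun r : ℝ => (2 * (Real.pi : ℂ) * Complex.I)⁻¹ •
        ∫ t in (0:ℝ)..1, γ' t • Ring.inverse (γ t • (1 : 𝓗 →L[ℂ] 𝓗) - H r))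
      ((2 * (Real.pi : ℂ) * Complex.I)⁻¹ •
        ∫ t in (0:ℝ)..1, γ' t •
          (Ring.inverse (γ t • (1 : 𝓗 →L[ℂ] 𝓗) - H s) ∘L H' s ∘L
            Ring.inverse (γ t • (1 : 𝓗 →L[ℂ] 𝓗) - H s))) s := by
  intro s
  have hγc : Continuous γ := continuous_iff_continuousAt.2 fun t ↦ (hγ t).continuousAt
  have hHc : Continuous H := continuous_iff_continuousAt.2 fun x ↦ (hH x).continuousAt
  have key := hasDerivAt_intervalIntegral_mul_ringInverse_sub zero_le_one
    (hγ'.smul continuous_const).continuousOn (hγc.smul continuous_const).continuousOn hHc (hH s)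
    (w := fun t ↦ γ' t • (1 : 𝓗 →L[ℂ] 𝓗)) (c := fun t ↦ γ t • (1 : 𝓗 →L[ℂ] 𝓗))
    fun x t _ ↦ hres x t
  simp only [smul_one_mul, ContinuousLinearMap.mul_def] at key
  exact key.const_smul (2 * (Real.pi : ℂ) * Complex.I)⁻¹

/-- Differentiability of Riesz spectral projections. If `H s` is a
norm-differentiable family of bounded self-adjoint operators and `γ` is a closed contour in
the resolvent set of every `H s`, then `E s = (2πi)⁻¹ ∮_γ (ζ - H s)⁻¹ dζ` is differentiable
with `∂ₛ E s = (2πi)⁻¹ ∮_γ (ζ - H s)⁻¹ (∂ₛ H s) (ζ - H s)⁻¹ dζ`. -/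
theorem stmt5 {𝓗 : Type*} [NormedAddCommGroup 𝓗] [InnerProductSpace ℂ 𝓗] [CompleteSpace 𝓗]
    (H H' : ℝ → 𝓗 →L[ℂ] 𝓗)
    (hH : ∀ s, HasDerivAt H (H' s) s)
    (hsa : ∀ s, IsSelfAdjoint (H s))
    (γ γ' : ℝ → ℂ)
    (hγ : ∀ t, HasDerivAt γ (γ' t) t)
    (hγ' : Continuous γ')
    (hclosed : γ 1 = γ 0)
    (hres : ∀ s t, IsUnit (γ t • (1 : 𝓗 →L[ℂ] 𝓗) - H s)) :
    ∀ s : ℝ, HasDerivAt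
      (fun r : ℝ => (2 * (Real.pi : ℂ) * Complex.I)⁻¹ •
        ∫ t in (0:ℝ)..1, γ' t • Ring.inverse (γ t • (1 : 𝓗 →L[ℂ] 𝓗) - H r))
      ((2 * (Real.pi : ℂ) * Complex.I)⁻¹ •
        ∫ t in (0:ℝ)..1, γ' t •
          (Ring.inverse (γ t • (1 : 𝓗 →L[ℂ] 𝓗) - H s) ∘L H' s ∘L
            Ring.inverse (γ t • (1 : 𝓗 →L[ℂ] 𝓗) - H s))) s :=
  stmt5_general H H' hH γ γ' hγ hγ' hres
end

section
/- Combes–Thomas type corollary: let A be a bounded self-adjoint operator on ℓ²(ℤᵈ) ⊗ ℂⁿ and z ∈ ℂ with dist(z, spec(A)) ≥ g/2 > 0, and suppose S(A, μ) := sup_x Σ_y (e^{μ|x−y|^ε} − 1)|⟨e_x, A e_y⟩| is finite for some μ > 0 and ε ∈ (0,1]. Then the matrix elements of the resolvent satisfy |⟨e_x, (z − A)⁻¹ e_y⟩| ≤ 4 g⁻¹ exp(−μ min{1, g/(4 S(A, μ))} |x − y|^ε). -/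
/-!
Combes–Thomas argument. Fix `x, y`, let `μ' = μ min{1, g/(4S)}` and
`w v = μ' min(|v - y|^ε, |x - y|^ε)`; `w` is bounded and `|w u - w v| ≤ μ' |u - v|^ε` since
`t ↦ t^ε` is subadditive. Conjugation by the diagonal operator `e^w` turns `z - A` into
`z - A - K`, where `K` has matrix entries `(e^(w u - w v) - 1) A_uv`. Because
`e^(μ' t) - 1 ≤ (μ'/μ)(e^(μ t) - 1)`, the Schur test gives `‖K‖ ≤ (μ'/μ) S ≤ g/4`. Together with
`‖(z - A)⁻¹‖ ≤ 2/g` a Neumann series bounds `(z - A - K)⁻¹` by `4/g`, and the `(x, y)` entry of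
`(z - A)⁻¹ = e^(-w) (z - A - K)⁻¹ e^w` is that of `(z - A - K)⁻¹` times
`e^(-(w x - w y)) = e^(-μ' |x - y|^ε)`.
-/

open scoped ENNReal lp InnerProductSpace

namespace Real

lemma abs_exp_sub_one_le_exp_abs_sub_one (t : ℝ) : |exp t - 1| ≤ exp |t| - 1 := by
  rcases le_total 0 t with ht | ht
  · rw [abs_of_nonneg ht, abs_of_nonneg (by linarith [one_le_exp ht])]
  · rw [abs_of_nonpos ht, abs_of_nonpos (by linarith [exp_le_one_iff.2 ht])]
    linarith [add_one_le_exp t, add_one_le_exp (-t)]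

lemma exp_mul_sub_one_le {m s : ℝ} (hm0 : 0 ≤ m) (hm1 : m ≤ 1) :
    exp (m * s) - 1 ≤ m * (exp s - 1) := by
  have := convexOn_exp.2 (Set.mem_univ s) (Set.mem_univ 0) hm0 (sub_nonneg.2 hm1) (by ring)
  simp only [smul_eq_mul, mul_zero, add_zero, exp_zero] at this
  linarith

lemma abs_rpow_sub_rpow_le {ε a b : ℝ} (hε0 : 0 ≤ ε) (hε1 : ε ≤ 1) (ha : 0 ≤ a) (hb : 0 ≤ b) :
    |a ^ ε - b ^ ε| ≤ |a - b| ^ ε := by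
  have key (p q : ℝ) (hp : 0 ≤ p) (hq : 0 ≤ q) : p ^ ε - q ^ ε ≤ |p - q| ^ ε := by
    have := (rpow_le_rpow hp (by linarith [le_abs_self (p - q)] : p ≤ q + |p - q|) hε0).trans
      (rpow_add_le_add_rpow hq (abs_nonneg _) hε0 hε1)
    linarith
  rw [abs_sub_le_iff]
  exact ⟨key a b ha hb, abs_sub_comm a b ▸ key b a hb ha⟩

end Real

lemma tsum_sq_le_tsum_mul_tsum_of_sq_le_mul {ι : Type*} {r f g : ι → ℝ} (hr : ∀ i, 0 ≤ r i)
    (hf : ∀ i, 0 ≤ f i) (hg : ∀ i, 0 ≤ g i) (hfs : Summable f) (hgs : Summable g)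
    (hrfg : ∀ i, r i ^ 2 ≤ f i * g i) :
    (∑' i, r i) ^ 2 ≤ (∑' i, f i) * ∑' i, g i := by
  have hrs : Summable r := (hfs.add hgs).of_nonneg_of_le hr fun i => by
    nlinarith [hrfg i, sq_nonneg (f i - g i), sq_nonneg (r i - (f i + g i)), hf i, hg i]
  refine le_of_tendsto' (hrs.hasSum.pow 2) fun s => ?_
  calc (∑ i ∈ s, r i) ^ 2 ≤ (∑ i ∈ s, f i) * ∑ i ∈ s, g i :=
        Finset.sum_sq_le_sum_mul_sum_of_sq_le_mul s (fun i _ => hf i) (fun i _ => hg i)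
          fun i _ => hrfg i
    _ ≤ (∑' i, f i) * ∑' i, g i :=
        mul_le_mul (hfs.sum_le_tsum s fun i _ => hf i) (hgs.sum_le_tsum s fun i _ => hg i)
          (Finset.sum_nonneg fun i _ => hg i) (tsum_nonneg hf)

lemma Ring.inverse_units_conj {M₀ : Type*} [MonoidWithZero M₀] (a : M₀) (d : M₀ˣ) :
    inverse (↑d * a * ↑d⁻¹) = ↑d * inverse a * ↑d⁻¹ := by
  rw [inverse_mul (.inr d⁻¹.isUnit), inverse_mul (.inl d.isUnit), inverse_unit, inverse_unit,
    inv_inv, mul_assoc]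

lemma norm_ringInverse_sub_le {R : Type*} [NormedRing R] [HasSummableGeomSeries R]
    (h1 : ‖(1 : R)‖ ≤ 1) {a k : R} (ha : IsUnit a) (hk : ‖Ring.inverse a‖ * ‖k‖ < 1) :
    ‖Ring.inverse (a - k)‖ ≤ ‖Ring.inverse a‖ / (1 - ‖Ring.inverse a‖ * ‖k‖) := by
  set t := Ring.inverse a * k
  have ht : ‖t‖ < 1 := (norm_mul_le _ _).trans_lt hk
  have hfac : a - k = a * (1 - t) := by
    rw [mul_sub, mul_one, ← mul_assoc, Ring.mul_inverse_cancel a ha, one_mul]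
  rw [hfac, Ring.inverse_mul (.inl ha), NormedRing.inverse_one_sub t ht, div_eq_inv_mul]
  refine (norm_mul_le _ _).trans (mul_le_mul_of_nonneg_right ?_ (norm_nonneg _))
  have : (1 - ‖t‖)⁻¹ ≤ (1 - ‖Ring.inverse a‖ * ‖k‖)⁻¹ :=
    inv_anti₀ (by linarith) (by linarith [norm_mul_le (Ring.inverse a) k])
  have hgeom : ‖((Units.oneSub t ht)⁻¹ : Rˣ).val‖ ≤ ‖(1 : R)‖ - 1 + (1 - ‖t‖)⁻¹ :=
    tsum_geometric_le_of_norm_lt_one t ht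
  linarith

lemma IsStarNormal.norm_resolvent_le {A : Type*} [CStarAlgebra A] {a : A} (ha : IsStarNormal a)
    {z : ℂ} {r : ℝ} (hr : 0 < r) (h : ∀ w ∈ spectrum ℂ a, r ≤ ‖z - w‖) :
    ‖resolvent a z‖ ≤ r⁻¹ := by
  have hne (w : ℂ) (hw : w ∈ spectrum ℂ a) : z - w ≠ 0 := fun hzw => by
    linarith [h w hw, norm_eq_zero.2 hzw]
  have hcfc : algebraMap ℂ A z - a = cfc (fun w => z - w) a := by
    rw [cfc_sub .., cfc_const z a, cfc_id' ℂ a]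
  rw [resolvent, hcfc, ← cfc_inv _ a hne]
  exact norm_cfc_le (inv_nonneg.2 hr.le) fun w hw => by
    rw [norm_inv]; exact inv_anti₀ hr (h w hw)

namespace lp

variable {ι 𝕜 : Type*} [RCLike 𝕜] {p : ℝ≥0∞} [Fact (1 ≤ p)]

noncomputable def mulInfty : ℓ^∞(ι, 𝕜) →* (ℓ^p(ι, 𝕜) →L[𝕜] ℓ^p(ι, 𝕜)) where
  toFun f := LinearMap.mkContinuous
    { toFun x := ⟨⇑f * ⇑x, ((lp.memℓp x).norm.const_smul ‖f‖).mono fun i => by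
        simpa [norm_mul] using mul_le_mul_of_nonneg_right
          (lp.norm_apply_le_norm ENNReal.top_ne_zero f i) (norm_nonneg (x i))⟩
      map_add' x y := by ext i; exact mul_add (f i) (x i) (y i)
      map_smul' c x := by ext i; simp [mul_left_comm] }
    ‖f‖ fun x => by
      have hp : p ≠ 0 := (zero_lt_one.trans_le Fact.out).ne'
      calc _ ≤ ‖(‖f‖ : 𝕜) • x‖ := lp.norm_mono hp fun i => by
              simpa [norm_mul, norm_smul] using mul_le_mul_of_nonneg_right
                (lp.norm_apply_le_norm ENNReal.top_ne_zero f i) (norm_nonneg (x i))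
        _ = ‖f‖ * ‖x‖ := by rw [lp.norm_const_smul hp, RCLike.norm_ofReal, abs_norm]
  map_one' := by ext x i; exact one_mul (x i)
  map_mul' f g := by ext x i; exact mul_assoc (f i) (g i) (x i)

lemma mulInfty_apply_apply (f : ℓ^∞(ι, 𝕜)) (x : ℓ^p(ι, 𝕜)) (i : ι) :
    mulInfty f x i = f i * x i := rfl

lemma memℓp_infty_exp (w : ℓ^∞(ι, ℝ)) : Memℓp (fun i => (Real.exp (w i) : ℂ)) ∞ :=
  memℓp_infty ⟨Real.exp ‖w‖, by
    rintro _ ⟨i, rfl⟩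
    simpa [Complex.norm_real, abs_of_pos (Real.exp_pos _)] using
      (le_abs_self _).trans (lp.norm_apply_le_norm ENNReal.top_ne_zero w i)⟩

noncomputable def expUnit (w : ℓ^∞(ι, ℝ)) : (ℓ^∞(ι, ℂ))ˣ where
  val := ⟨_, memℓp_infty_exp w⟩
  inv := ⟨_, memℓp_infty_exp (-w)⟩
  val_inv := by ext i; simp [← Complex.exp_add]
  inv_val := by ext i; simp [← Complex.exp_add]

@[simp] lemma expUnit_apply (w : ℓ^∞(ι, ℝ)) (i : ι) :
    (expUnit w : ℓ^∞(ι, ℂ)) i = Real.exp (w i) := rfl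

@[simp] lemma expUnit_inv_apply (w : ℓ^∞(ι, ℝ)) (i : ι) :
    (↑(expUnit w)⁻¹ : ℓ^∞(ι, ℂ)) i = Real.exp (-w i) := rfl

end lp

namespace HilbertBasis

variable {ι 𝕜 E : Type*} [RCLike 𝕜] [NormedAddCommGroup E] [InnerProductSpace 𝕜 E]

noncomputable def diagonal (b : HilbertBasis ι 𝕜 E) : ℓ^∞(ι, 𝕜) →* (E →L[𝕜] E) :=
  MonoidHomClass.toMonoidHom b.repr.symm.toContinuousLinearEquiv.conjContinuousAlgEquiv |>.comp
    (lp.mulInfty (p := 2))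

variable (b : HilbertBasis ι 𝕜 E) (f : ℓ^∞(ι, 𝕜))

lemma repr_diagonal_apply (x : E) (i : ι) : b.repr (b.diagonal f x) i = f i * b.repr x i := by
  simp [diagonal, ContinuousLinearEquiv.conjContinuousAlgEquiv_apply_apply,
    lp.mulInfty_apply_apply]

lemma inner_basis_diagonal_apply (x : E) (i : ι) :
    ⟪b i, b.diagonal f x⟫_𝕜 = f i * ⟪b i, x⟫_𝕜 := by
  simp only [← b.repr_apply_apply, repr_diagonal_apply]

lemma diagonal_apply_basis (i : ι) : b.diagonal f (b i) = f i • b i := by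
  classical
  refine b.repr.injective (lp.ext (funext fun j => ?_))
  rw [repr_diagonal_apply, map_smul, b.repr_self]
  rcases eq_or_ne j i with rfl | hji <;> simp [lp.single_apply, *]

lemma inner_basis_conj_diagonal_apply (f : (ℓ^∞(ι, 𝕜))ˣ) (T : E →L[𝕜] E) (u v : ι) :
    ⟪b u, (↑(Units.map b.diagonal f) * T * ↑(Units.map b.diagonal f)⁻¹) (b v)⟫_𝕜 =
      (f : ℓ^∞(ι, 𝕜)) u * (↑f⁻¹ : ℓ^∞(ι, 𝕜)) v * ⟪b u, T (b v)⟫_𝕜 := by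
  simp only [← map_inv, Units.coe_map, mul_apply_eq_comp, diagonal_apply_basis,
    inner_basis_diagonal_apply, map_smul, inner_smul_right]
  ring

lemma hasSum_norm_inner_sq (x : E) : HasSum (fun i => ‖⟪b i, x⟫_𝕜‖ ^ 2) (‖x‖ ^ 2) := by
  have hterm (i : ι) : RCLike.re (⟪x, b i⟫_𝕜 * ⟪b i, x⟫_𝕜) = ‖⟪b i, x⟫_𝕜‖ ^ 2 := by
    rw [← inner_conj_symm, RCLike.conj_mul, ← RCLike.ofReal_pow, RCLike.ofReal_re]
  simpa only [RCLike.reCLM_apply, hterm, inner_self_eq_norm_sq] using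
    (b.hasSum_inner_mul_inner x x).mapL RCLike.reCLM

lemma norm_inner_apply_le_tsum (T : E →L[𝕜] E) (y x : E) {k : ι → ℝ}
    (hk : ∀ v, ‖⟪y, T (b v)⟫_𝕜‖ ≤ k v) (hks : Summable k) :
    ‖⟪y, T x⟫_𝕜‖ ≤ ∑' v, k v * ‖⟪b v, x⟫_𝕜‖ := by
  have hexp : HasSum (fun v => ⟪b v, x⟫_𝕜 * ⟪y, T (b v)⟫_𝕜) ⟪y, T x⟫_𝕜 := by
    simpa [b.repr_apply_apply, inner_smul_right] using
      ((b.hasSum_repr x).mapL T).mapL (innerSL 𝕜 y)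
  rw [← hexp.tsum_eq]
  refine tsum_of_norm_bounded (Summable.hasSum ?_) fun v => ?_
  · refine (hks.mul_right ‖x‖).of_nonneg_of_le (fun v => ?_) fun v => ?_
    · exact mul_nonneg ((norm_nonneg _).trans (hk v)) (norm_nonneg _)
    · simpa [b.orthonormal.1 v] using mul_le_mul_of_nonneg_left
        (norm_inner_le_norm (b v) x) ((norm_nonneg _).trans (hk v))
  · rw [norm_mul, mul_comm]
    exact mul_le_mul_of_nonneg_right (hk v) (norm_nonneg _)

theorem opNorm_le_of_schur (T : E →L[𝕜] E) {k : ι → ι → ℝ} {c : ℝ} (hc : 0 ≤ c)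
    (hk : ∀ u v, ‖⟪b u, T (b v)⟫_𝕜‖ ≤ k u v)
    (hrow : ∀ u, Summable (k u)) (hrow_le : ∀ u, ∑' v, k u v ≤ c)
    (hcol : ∀ v, Summable (k · v)) (hcol_le : ∀ v, ∑' u, k u v ≤ c) :
    ‖T‖ ≤ c := by
  -- Cauchy–Schwarz on row `u` gives `|(T x)_u|² ≤ c Σ_v k u v |x_v|²`; summing over `u` and
  -- using the column bound gives `‖T x‖² ≤ c² ‖x‖²`.
  refine T.opNorm_le_bound hc fun x => ?_
  have hk0 (u v : ι) : 0 ≤ k u v := (norm_nonneg _).trans (hk u v)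
  set X : ι → ℝ := fun v => ‖⟪b v, x⟫_𝕜‖
  have hX := b.hasSum_norm_inner_sq x
  have hX_le (v : ι) : X v ^ 2 ≤ ‖x‖ ^ 2 := by
    have := norm_inner_le_norm (𝕜 := 𝕜) (b v) x
    rw [b.orthonormal.1 v, one_mul] at this
    exact pow_le_pow_left₀ (norm_nonneg _) this 2
  have hG (u : ι) : Summable fun v => k u v * X v ^ 2 :=
    ((hrow u).mul_right (‖x‖ ^ 2)).of_nonneg_of_le (fun v => mul_nonneg (hk0 u v) (sq_nonneg _))
      fun v => mul_le_mul_of_nonneg_left (hX_le v) (hk0 u v)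
  have hentry (u : ι) : ‖⟪b u, T x⟫_𝕜‖ ^ 2 ≤ c * ∑' v, k u v * X v ^ 2 :=
    calc ‖⟪b u, T x⟫_𝕜‖ ^ 2 ≤ (∑' v, k u v * X v) ^ 2 :=
          pow_le_pow_left₀ (norm_nonneg _) (b.norm_inner_apply_le_tsum T _ x (hk u) (hrow u)) 2
      _ ≤ (∑' v, k u v) * ∑' v, k u v * X v ^ 2 :=
          tsum_sq_le_tsum_mul_tsum_of_sq_le_mul (fun v => mul_nonneg (hk0 u v) (norm_nonneg _))
            (hk0 u) (fun v => mul_nonneg (hk0 u v) (sq_nonneg _)) (hrow u) (hG u)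
            fun v => le_of_eq (by ring)
      _ ≤ c * ∑' v, k u v * X v ^ 2 :=
          mul_le_mul_of_nonneg_right (hrow_le u)
            (tsum_nonneg fun v => mul_nonneg (hk0 u v) (sq_nonneg _))
  have hcols (s : Finset ι) : ∑ u ∈ s, ∑' v, k u v * X v ^ 2 ≤ c * ‖x‖ ^ 2 := by
    rw [← Summable.tsum_finsetSum fun u _ => hG u, ← hX.tsum_eq, ← tsum_mul_left]
    refine Summable.tsum_le_tsum (fun v => ?_) (summable_sum fun u _ => hG u)
      (hX.summable.mul_left c)
    rw [← Finset.sum_mul]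
    exact mul_le_mul_of_nonneg_right
      ((hcol v).sum_le_tsum s (fun u _ => hk0 u v) |>.trans (hcol_le v)) (sq_nonneg _)
  have hsq : ‖T x‖ ^ 2 ≤ (c * ‖x‖) ^ 2 := by
    rw [← (b.hasSum_norm_inner_sq (T x)).tsum_eq]
    refine (b.hasSum_norm_inner_sq (T x)).summable.tsum_le_of_sum_le fun s => ?_
    calc ∑ u ∈ s, ‖⟪b u, T x⟫_𝕜‖ ^ 2 ≤ ∑ u ∈ s, c * ∑' v, k u v * X v ^ 2 :=
          Finset.sum_le_sum fun u _ => hentry u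
      _ ≤ c * (c * ‖x‖ ^ 2) := by
          rw [← Finset.mul_sum]; exact mul_le_mul_of_nonneg_left (hcols s) hc
      _ = (c * ‖x‖) ^ 2 := by ring
  exact (pow_le_pow_iff_left₀ (norm_nonneg _) (by positivity) two_ne_zero).1 hsq

end HilbertBasis

lemma abs_min_rpow_dist_sub_le {X : Type*} [PseudoMetricSpace X] {ε : ℝ} (hε0 : 0 ≤ ε)
    (hε1 : ε ≤ 1) (y : X) (R : ℝ) (u v : X) :
    |min (dist u y ^ ε) R - min (dist v y ^ ε) R| ≤ dist u v ^ ε :=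
  calc _ ≤ |dist u y ^ ε - dist v y ^ ε| := by
        simpa using abs_min_sub_min_le_max (dist u y ^ ε) R (dist v y ^ ε) R
    _ ≤ |dist u y - dist v y| ^ ε := Real.abs_rpow_sub_rpow_le hε0 hε1 dist_nonneg dist_nonneg
    _ ≤ dist u v ^ ε := Real.rpow_le_rpow (abs_nonneg _) (abs_dist_sub_le u v y) hε0

lemma exists_weight_abs_sub_le_of_dist {ι X : Type*} [PseudoMetricSpace X] (pos : ι → X)
    {ε t : ℝ} (hε0 : 0 < ε) (hε1 : ε ≤ 1) (ht : 0 ≤ t) (x y : ι) :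
    ∃ w : ℓ^∞(ι, ℝ), (∀ u v, |w u - w v| ≤ t * dist (pos u) (pos v) ^ ε) ∧
      w x - w y = t * dist (pos x) (pos y) ^ ε := by
  set R := dist (pos x) (pos y) ^ ε
  have hR : 0 ≤ R := by positivity
  refine ⟨⟨fun v => t * min (dist (pos v) (pos y) ^ ε) R, memℓp_infty ⟨t * R, ?_⟩⟩,
    fun u v => ?_, ?_⟩
  · rintro _ ⟨v, rfl⟩
    show ‖t * min (dist (pos v) (pos y) ^ ε) R‖ ≤ t * R
    rw [Real.norm_of_nonneg (by positivity)]
    exact mul_le_mul_of_nonneg_left (min_le_right _ _) ht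
  · show |t * _ - t * _| ≤ _
    rw [← mul_sub, abs_mul, abs_of_nonneg ht]
    exact mul_le_mul_of_nonneg_left (abs_min_rpow_dist_sub_le hε0.le hε1 _ _ _ _) ht
  · show t * _ - t * _ = _
    simp [R, Real.zero_rpow hε0.ne', hR]

section CombesThomas

variable {ι H : Type*} [NormedAddCommGroup H] [InnerProductSpace ℂ H] [CompleteSpace H]

lemma HilbertBasis.norm_conj_expUnit_sub_le (b : HilbertBasis ι ℂ H) {A : H →L[ℂ] H}
    (hA : IsSelfAdjoint A) (w : ℓ^∞(ι, ℝ)) {δ : ℝ} (hδ : 0 ≤ δ)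
    (hsum : ∀ u, Summable fun v => (Real.exp |w u - w v| - 1) * ‖⟪b u, A (b v)⟫_ℂ‖)
    (hle : ∀ u, ∑' v, (Real.exp |w u - w v| - 1) * ‖⟪b u, A (b v)⟫_ℂ‖ ≤ δ) :
    ‖↑(Units.map b.diagonal (lp.expUnit w)) * A * ↑(Units.map b.diagonal (lp.expUnit w))⁻¹ - A‖
      ≤ δ := by
  have hentry (u v : ι) : ‖⟪b u, (↑(Units.map b.diagonal (lp.expUnit w)) * A *
      ↑(Units.map b.diagonal (lp.expUnit w))⁻¹ - A) (b v)⟫_ℂ‖ ≤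
      (Real.exp |w u - w v| - 1) * ‖⟪b u, A (b v)⟫_ℂ‖ := by
    rw [sub_apply, inner_sub_right, b.inner_basis_conj_diagonal_apply, ← sub_one_mul, norm_mul,
      lp.expUnit_apply, lp.expUnit_inv_apply, ← Complex.ofReal_mul, ← Real.exp_add,
      ← sub_eq_add_neg, ← Complex.ofReal_one, ← Complex.ofReal_sub, Complex.norm_real,
      Real.norm_eq_abs]
    exact mul_le_mul_of_nonneg_right (Real.abs_exp_sub_one_le_exp_abs_sub_one _) (norm_nonneg _)
  have hcomm (u v : ι) : (Real.exp |w u - w v| - 1) * ‖⟪b u, A (b v)⟫_ℂ‖ =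
      (Real.exp |w v - w u| - 1) * ‖⟪b v, A (b u)⟫_ℂ‖ := by
    rw [abs_sub_comm, ← ContinuousLinearMap.adjoint_inner_left, hA.adjoint_eq, ← inner_conj_symm,
      RCLike.norm_conj]
  exact b.opNorm_le_of_schur _ hδ hentry hsum hle
    (fun v => (hsum v).congr fun u => hcomm v u)
    fun v => (tsum_congr fun u => hcomm u v).trans_le (hle v)

theorem HilbertBasis.norm_inner_resolvent_le_of_weight (b : HilbertBasis ι ℂ H)
    {A : H →L[ℂ] H} (hA : IsSelfAdjoint A) {z : ℂ} {g : ℝ} (hg : 0 < g)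
    (hz : ∀ w ∈ spectrum ℂ A, g / 2 ≤ ‖z - w‖) (w : ℓ^∞(ι, ℝ))
    (hsum : ∀ u, Summable fun v => (Real.exp |w u - w v| - 1) * ‖⟪b u, A (b v)⟫_ℂ‖)
    (hle : ∀ u, ∑' v, (Real.exp |w u - w v| - 1) * ‖⟪b u, A (b v)⟫_ℂ‖ ≤ g / 4) (x y : ι) :
    ‖⟪b x, resolvent A z (b y)⟫_ℂ‖ ≤ 4 / g * Real.exp (-(w x - w y)) := by
  set D := Units.map b.diagonal (lp.expUnit w)
  set K := ↑D * A * ↑D⁻¹ - A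
  have hK : ‖K‖ ≤ g / 4 := b.norm_conj_expUnit_sub_le hA w (by positivity) hsum hle
  have hres : ‖Ring.inverse (algebraMap ℂ _ z - A)‖ ≤ 2 / g := by
    simpa [resolvent] using hA.isStarNormal.norm_resolvent_le (half_pos hg) hz
  have hunit : IsUnit (algebraMap ℂ _ z - A) :=
    spectrum.notMem_iff.1 fun hzA => by linarith [hz z hzA, sub_self z ▸ norm_zero (E := ℂ)]
  have hsmall : ‖Ring.inverse (algebraMap ℂ _ z - A)‖ * ‖K‖ ≤ 1 / 2 :=
    calc _ ≤ 2 / g * (g / 4) := mul_le_mul hres hK (norm_nonneg _) (by positivity)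
      _ = 1 / 2 := by field_simp; norm_num
  have hres' : ‖Ring.inverse (algebraMap ℂ _ z - A - K)‖ ≤ 4 / g :=
    calc _ ≤ _ := norm_ringInverse_sub_le ContinuousLinearMap.norm_id_le hunit (by linarith)
      _ ≤ 2 / g / (1 / 2) := div_le_div₀ (by positivity) hres (by norm_num) (by linarith)
      _ = 4 / g := by ring
  have hconj : resolvent A z = ↑D⁻¹ * Ring.inverse (algebraMap ℂ _ z - A - K) * ↑D := by
    have : ↑D * (algebraMap ℂ _ z - A) * ↑D⁻¹ = algebraMap ℂ _ z - A - K := by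
      rw [mul_sub, sub_mul, ← Algebra.commutes, mul_assoc, Units.mul_inv, mul_one]
      simp only [K]
      abel
    rw [← this, Ring.inverse_units_conj, resolvent]
    simp [mul_assoc]
  have hD : (D : H →L[ℂ] H) = ↑(Units.map b.diagonal (lp.expUnit w)⁻¹)⁻¹ := by
    rw [map_inv, inv_inv]
  rw [hconj, ← map_inv, hD, b.inner_basis_conj_diagonal_apply, inv_inv, lp.expUnit_apply,
    lp.expUnit_inv_apply, norm_mul, norm_mul, Complex.norm_real, Complex.norm_real,
    Real.norm_of_nonneg (Real.exp_pos _).le, Real.norm_of_nonneg (Real.exp_pos _).le,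
    ← Real.exp_add, mul_comm (4 / g), show -w x + w y = -(w x - w y) by ring]
  refine mul_le_mul_of_nonneg_left ?_ (Real.exp_pos _).le
  set R := Ring.inverse (algebraMap ℂ (H →L[ℂ] H) z - A - K)
  calc ‖⟪b x, R (b y)⟫_ℂ‖ ≤ ‖b x‖ * (‖R‖ * ‖b y‖) :=
        (norm_inner_le_norm _ _).trans (mul_le_mul_of_nonneg_left (R.le_opNorm _) (norm_nonneg _))
    _ ≤ 4 / g := by simpa [b.orthonormal.1] using hres'

theorem HilbertBasis.norm_inner_resolvent_le {X : Type*} [PseudoMetricSpace X]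
    (b : HilbertBasis ι ℂ H) (pos : ι → X) {A : H →L[ℂ] H} (hA : IsSelfAdjoint A) {z : ℂ}
    {g : ℝ} (hg : 0 < g) (hz : ∀ w ∈ spectrum ℂ A, g / 2 ≤ ‖z - w‖) {μ ε S : ℝ} (hμ : 0 ≤ μ)
    (hε0 : 0 < ε) (hε1 : ε ≤ 1)
    (hsum : ∀ u, Summable fun v =>
      (Real.exp (μ * dist (pos u) (pos v) ^ ε) - 1) * ‖⟪b u, A (b v)⟫_ℂ‖)
    (hS : ∀ u, ∑' v, (Real.exp (μ * dist (pos u) (pos v) ^ ε) - 1) * ‖⟪b u, A (b v)⟫_ℂ‖ ≤ S)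
    (x y : ι) :
    ‖⟪b x, resolvent A z (b y)⟫_ℂ‖ ≤
      4 / g * Real.exp (-(μ * min 1 (g / (4 * S)) * dist (pos x) (pos y) ^ ε)) := by
  set k : ι → ι → ℝ := fun u v =>
    (Real.exp (μ * dist (pos u) (pos v) ^ ε) - 1) * ‖⟪b u, A (b v)⟫_ℂ‖
  have hk0 (u v : ι) : 0 ≤ k u v :=
    mul_nonneg (by linarith [Real.one_le_exp (by positivity : 0 ≤ μ * dist (pos u) (pos v) ^ ε)])
      (norm_nonneg _)
  have hS0 : 0 ≤ S := (tsum_nonneg (hk0 x)).trans (hS x)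
  set m := min 1 (g / (4 * S))
  have hm0 : 0 ≤ m := le_min zero_le_one (by positivity)
  have hmS : m * S ≤ g / 4 := by
    rcases hS0.eq_or_lt with rfl | hS0
    · simp; positivity
    · calc m * S ≤ g / (4 * S) * S := mul_le_mul_of_nonneg_right (min_le_right _ _) hS0.le
        _ = g / 4 := by field_simp
  obtain ⟨w, hw, hwxy⟩ :=
    exists_weight_abs_sub_le_of_dist pos hε0 hε1 (mul_nonneg hμ hm0) x y
  have hterm (u v : ι) : (Real.exp |w u - w v| - 1) * ‖⟪b u, A (b v)⟫_ℂ‖ ≤ m * k u v :=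
    calc _ ≤ (Real.exp (m * (μ * dist (pos u) (pos v) ^ ε)) - 1) * ‖⟪b u, A (b v)⟫_ℂ‖ := by
          gcongr; linarith [hw u v]
      _ ≤ m * (Real.exp (μ * dist (pos u) (pos v) ^ ε) - 1) * ‖⟪b u, A (b v)⟫_ℂ‖ := by
          gcongr; exact Real.exp_mul_sub_one_le hm0 (min_le_left _ _)
      _ = m * k u v := by ring
  have hsum' (u : ι) : Summable fun v => (Real.exp |w u - w v| - 1) * ‖⟪b u, A (b v)⟫_ℂ‖ :=
    ((hsum u).mul_left m).of_nonneg_of_le (fun v => mul_nonneg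
      (by linarith [Real.one_le_exp (abs_nonneg (w u - w v))]) (norm_nonneg _)) (hterm u)
  have hle (u : ι) : ∑' v, (Real.exp |w u - w v| - 1) * ‖⟪b u, A (b v)⟫_ℂ‖ ≤ g / 4 :=
    calc _ ≤ ∑' v, m * k u v := (hsum' u).tsum_le_tsum (hterm u) ((hsum u).mul_left m)
      _ ≤ m * S := by rw [tsum_mul_left]; exact mul_le_mul_of_nonneg_left (hS u) hm0
      _ ≤ g / 4 := hmS
  simpa [hwxy, mul_assoc] using b.norm_inner_resolvent_le_of_weight hA hg hz w hsum' hle x y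

end CombesThomas

/-- Combes–Thomas type corollary.  For a bounded self-adjoint operator `A` on
`ℓ²(ℤᵈ) ⊗ ℂⁿ` (given via an orthonormal basis `e` indexed by `(Fin d → ℤ) × Fin n`), if
`dist(z, spec A) ≥ g/2 > 0` and `S ≥ sup_x Σ_y (e^{μ |x-y|^ε} - 1) |⟨e_x, A e_y⟩|`, then
`|⟨e_x, (z - A)⁻¹ e_y⟩| ≤ (4/g) exp(-μ min{1, g/(4S)} |x-y|^ε)`. -/
theorem stmt14 {𝓗 : Type*} [NormedAddCommGroup 𝓗] [InnerProductSpace ℂ 𝓗] [CompleteSpace 𝓗]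
    (d n : ℕ)
    (e : (Fin d → ℤ) × Fin n → 𝓗)
    (he : Orthonormal ℂ e)
    (hdense : (Submodule.span ℂ (Set.range e)).topologicalClosure = ⊤)
    (A : 𝓗 →L[ℂ] 𝓗) (hA : IsSelfAdjoint A)
    (z : ℂ) (g : ℝ) (hg : 0 < g)
    (hz : ∀ w ∈ spectrum ℂ A, g / 2 ≤ ‖z - w‖)
    (μ ε : ℝ) (hμ : 0 < μ) (hε : ε ∈ Set.Ioc (0:ℝ) 1)
    (S : ℝ)
    (hSum : ∀ x, Summable (fun y =>
      (Real.exp (μ * (∑ i, |((x.1 i : ℝ)) - ((y.1 i : ℝ))|) ^ ε) - 1) *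
        ‖(inner ℂ (e x) (A (e y)) : ℂ)‖))
    (hS : ∀ x, (∑' y, (Real.exp (μ * (∑ i, |((x.1 i : ℝ)) - ((y.1 i : ℝ))|) ^ ε) - 1) *
        ‖(inner ℂ (e x) (A (e y)) : ℂ)‖) ≤ S) :
    ∀ x y, ‖(inner ℂ (e x) (Ring.inverse (z • (1 : 𝓗 →L[ℂ] 𝓗) - A) (e y)) : ℂ)‖ ≤
      (4 / g) * Real.exp (-(μ * min 1 (g / (4 * S)) *
        (∑ i, |((x.1 i : ℝ)) - ((y.1 i : ℝ))|) ^ ε)) := by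
  intro x y
  let b := HilbertBasis.mk he hdense.ge
  have hb : ⇑b = e := HilbertBasis.coe_mk he hdense.ge
  let pos (u : (Fin d → ℤ) × Fin n) : PiLp 1 (fun _ : Fin d => ℝ) :=
    WithLp.toLp 1 fun i => (u.1 i : ℝ)
  have hdist (u v : (Fin d → ℤ) × Fin n) :
      dist (pos u) (pos v) = ∑ i, |(u.1 i : ℝ) - (v.1 i : ℝ)| := by
    simp [pos, PiLp.dist_eq_of_L1, Real.dist_eq]
  simpa [hb, hdist, resolvent, Algebra.algebraMap_eq_smul_one] using
    b.norm_inner_resolvent_le pos hA hg hz hμ.le hε.1 hε.2 (by simpa [hb, hdist] using hSum)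
      (by simpa [hb, hdist] using hS) x y
end

section
/- Let P₁, P₂ be orthogonal projections on a Hilbert space H with Γ an antiunitary involution such that ΓPᵢΓ = 1 − Pᵢ (basis projections). Then the intersections satisfy Γ(ran P₁ ∩ ran(1 − P₂)) = ran(1 − P₁) ∩ ran P₂; in particular dim(P₁ ∧ P₂^⊥) = dim(P₁^⊥ ∧ P₂), so the ℤ₂-index σ(P₁, P₂) := (−1)^{dim(P₁ ∧ P₂^⊥)} is symmetric: σ(P₁, P₂) = σ(P₂, P₁). -/
/-!
Conjugating by `Γ` turns `P` into `1 - P`, so `Γ` maps `ran P` onto `ran (1 - P)` and, being an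
involution, `ran (1 - P)` back onto `ran P`. As `Γ` is injective it maps `ran P₁ ∩ ran (1 - P₂)`
onto `ran (1 - P₁) ∩ ran P₂`, and since it is additive and conjugate-linear with conjugation a
bijection of `ℂ`, this restriction preserves the dimension.
-/
open Function Module

section
variable {M : Type*} [Sub M] {Γ P : M → M}

theorem Function.Involutive.image_range_eq_range_sub (hΓ : Involutive Γ)
    (hP : ∀ x, Γ (P (Γ x)) = x - P x) :
    Γ '' Set.range P = Set.range fun x => x - P x := by
  rw [← Set.range_comp, ← hΓ.surjective.range_comp]
  exact congrArg Set.range (funext hP)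

theorem Function.Involutive.image_range_sub_eq_range (hΓ : Involutive Γ)
    (hP : ∀ x, Γ (P (Γ x)) = x - P x) :
    Γ '' (Set.range fun x => x - P x) = Set.range P := by
  rw [← hΓ.image_range_eq_range_sub hP, ← Set.image_comp, hΓ.comp_self, Set.image_id]

theorem Function.Involutive.image_range_inter_range_sub (hΓ : Involutive Γ) {Q : M → M}
    (hP : ∀ x, Γ (P (Γ x)) = x - P x) (hQ : ∀ x, Γ (Q (Γ x)) = x - Q x) :
    Γ '' (Set.range P ∩ Set.range fun x => x - Q x) = (Set.range fun x => x - P x) ∩ Set.range Q := by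
  rw [Set.image_inter hΓ.injective, hΓ.image_range_eq_range_sub hP, hΓ.image_range_sub_eq_range hQ]

end

theorem finrank_eq_of_image_eq {R M : Type*} [Semiring R] [AddCommMonoid M] [Module R M]
    {σ : R → R} (hσ : Bijective σ) (Γ : M →+ M) (hΓ : Injective Γ)
    (hsmul : ∀ (r : R) x, Γ (r • x) = σ r • Γ x) {p q : Submodule R M}
    (hpq : Γ '' p = q) : finrank R p = finrank R q := by
  let j : p →+ q :=
    { toFun := fun x => ⟨Γ x, by rw [← SetLike.mem_coe, ← hpq]; exact Set.mem_image_of_mem Γ x.2⟩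
      map_zero' := Subtype.ext Γ.map_zero
      map_add' := fun x y => Subtype.ext (Γ.map_add x y) }
  have hj : Bijective j := by
    refine ⟨fun x y hxy => Subtype.ext (hΓ (congrArg Subtype.val hxy)), fun y => ?_⟩
    obtain ⟨x, hx, hxy⟩ : (y : M) ∈ Γ '' p := by rw [hpq]; exact y.2
    exact ⟨⟨x, hx⟩, Subtype.ext hxy⟩
  have hrank := rank_eq_of_equiv_equiv σ (AddEquiv.ofBijective j hj) hσ
    fun r x => Subtype.ext (hsmul r x)
  simpa only [finrank] using congrArg Cardinal.toNat hrank

theorem stmt17_general {H : Type*} [NormedAddCommGroup H] [InnerProductSpace ℂ H]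
    (Γ : H → H)
    (hΓadd : ∀ x y, Γ (x + y) = Γ x + Γ y)
    (hΓsmul : ∀ (c : ℂ) (x : H), Γ (c • x) = (starRingEnd ℂ) c • Γ x)
    (hΓinv : ∀ x, Γ (Γ x) = x)
    (P₁ P₂ : H →L[ℂ] H)
    (hP₁basis : ∀ x, Γ (P₁ (Γ x)) = x - P₁ x)
    (hP₂basis : ∀ x, Γ (P₂ (Γ x)) = x - P₂ x) :
    Γ '' ((LinearMap.range (P₁ : H →ₗ[ℂ] H) : Set H) ∩ (LinearMap.range ((1 - P₂ : H →L[ℂ] H) : H →ₗ[ℂ] H) : Set H))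
        = (LinearMap.range ((1 - P₁ : H →L[ℂ] H) : H →ₗ[ℂ] H) : Set H) ∩ (LinearMap.range (P₂ : H →ₗ[ℂ] H) : Set H) ∧
    Module.finrank ℂ ↥(LinearMap.range (P₁ : H →ₗ[ℂ] H) ⊓ LinearMap.range ((1 - P₂ : H →L[ℂ] H) : H →ₗ[ℂ] H))
        = Module.finrank ℂ ↥(LinearMap.range (P₂ : H →ₗ[ℂ] H) ⊓ LinearMap.range ((1 - P₁ : H →L[ℂ] H) : H →ₗ[ℂ] H)) ∧
    ((-1 : ℤ) ^ Module.finrank ℂ ↥(LinearMap.range (P₁ : H →ₗ[ℂ] H) ⊓ LinearMap.range ((1 - P₂ : H →L[ℂ] H) : H →ₗ[ℂ] H))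
        = (-1 : ℤ) ^ Module.finrank ℂ ↥(LinearMap.range (P₂ : H →ₗ[ℂ] H) ⊓ LinearMap.range ((1 - P₁ : H →L[ℂ] H) : H →ₗ[ℂ] H))) := by
  have hΓ : Involutive Γ := hΓinv
  have hset := hΓ.image_range_inter_range_sub hP₁basis hP₂basis
  have hfinrank := finrank_eq_of_image_eq (starRingAut : ℂ ≃+* ℂ).bijective
    (AddMonoidHom.mk' Γ hΓadd) hΓ.injective hΓsmul
    (p := LinearMap.range (P₁ : H →ₗ[ℂ] H) ⊓ LinearMap.range ((1 - P₂ : H →L[ℂ] H) : H →ₗ[ℂ] H))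
    (q := LinearMap.range (P₂ : H →ₗ[ℂ] H) ⊓ LinearMap.range ((1 - P₁ : H →L[ℂ] H) : H →ₗ[ℂ] H))
    (hset.trans (Set.inter_comm _ _))
  exact ⟨hset, hfinrank, by rw [hfinrank]⟩

/-- For basis projections `P₁, P₂` (orthogonal projections with
`ΓPᵢΓ = 1 - Pᵢ`), `Γ` maps `ran P₁ ∩ ran (1 - P₂)` onto `ran (1 - P₁) ∩ ran P₂`; in
particular the dimensions agree and the ℤ₂-index
`σ(P₁, P₂) = (-1)^{dim(P₁ ∧ P₂^⊥)}` is symmetric. -/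
theorem stmt17 {H : Type*} [NormedAddCommGroup H] [InnerProductSpace ℂ H] [CompleteSpace H]
    (Γ : H → H)
    (hΓadd : ∀ x y, Γ (x + y) = Γ x + Γ y)
    (hΓsmul : ∀ (c : ℂ) (x : H), Γ (c • x) = (starRingEnd ℂ) c • Γ x)
    (hΓinv : ∀ x, Γ (Γ x) = x)
    (hΓinner : ∀ x y, (inner ℂ (Γ x) (Γ y) : ℂ) = inner ℂ y x)
    (P₁ P₂ : H →L[ℂ] H)
    (hP₁idem : P₁ ∘L P₁ = P₁) (hP₁sa : IsSelfAdjoint P₁)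
    (hP₂idem : P₂ ∘L P₂ = P₂) (hP₂sa : IsSelfAdjoint P₂)
    (hP₁basis : ∀ x, Γ (P₁ (Γ x)) = x - P₁ x)
    (hP₂basis : ∀ x, Γ (P₂ (Γ x)) = x - P₂ x)
    (hfin₁ : FiniteDimensional ℂ ↥(LinearMap.range (P₁ : H →ₗ[ℂ] H) ⊓ LinearMap.range ((1 - P₂ : H →L[ℂ] H) : H →ₗ[ℂ] H)))
    (hfin₂ : FiniteDimensional ℂ ↥(LinearMap.range (P₂ : H →ₗ[ℂ] H) ⊓ LinearMap.range ((1 - P₁ : H →L[ℂ] H) : H →ₗ[ℂ] H))) :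
    Γ '' ((LinearMap.range (P₁ : H →ₗ[ℂ] H) : Set H) ∩ (LinearMap.range ((1 - P₂ : H →L[ℂ] H) : H →ₗ[ℂ] H) : Set H))
        = (LinearMap.range ((1 - P₁ : H →L[ℂ] H) : H →ₗ[ℂ] H) : Set H) ∩ (LinearMap.range (P₂ : H →ₗ[ℂ] H) : Set H) ∧
    Module.finrank ℂ ↥(LinearMap.range (P₁ : H →ₗ[ℂ] H) ⊓ LinearMap.range ((1 - P₂ : H →L[ℂ] H) : H →ₗ[ℂ] H))
        = Module.finrank ℂ ↥(LinearMap.range (P₂ : H →ₗ[ℂ] H) ⊓ LinearMap.range ((1 - P₁ : H →L[ℂ] H) : H →ₗ[ℂ] H)) ∧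
    ((-1 : ℤ) ^ Module.finrank ℂ ↥(LinearMap.range (P₁ : H →ₗ[ℂ] H) ⊓ LinearMap.range ((1 - P₂ : H →L[ℂ] H) : H →ₗ[ℂ] H))
        = (-1 : ℤ) ^ Module.finrank ℂ ↥(LinearMap.range (P₂ : H →ₗ[ℂ] H) ⊓ LinearMap.range ((1 - P₁ : H →L[ℂ] H) : H →ₗ[ℂ] H))) :=
  stmt17_general Γ hΓadd hΓsmul hΓinv P₁ P₂ hP₁basis hP₂basis
end
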